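/- arXiv:2103.07041 — 7 statements merged into one kernel-verified Lean document; each statement's English description precedes it below -/
import Mathlib

section
/- Let (γ, v, w) be a framed curve with curvature (ℓ̄, m̄, n̄, α) and μ = v × w, and fix λ ≠ 0. The parallel curve P(t) = γ(t) + λ v(t) has derivative P'(t) = λ ℓ̄(t) w(t) + (α(t) + λ m̄(t)) μ(t). In particular, P'(t)·v(t) = 0 for all t, and t₀ is a singular point of P if and only if ℓ̄(t₀) = 0 and α(t₀) + λ m̄(t₀) = 0. -/
open Matrix


lemma my_bac_cab (u x y : Fin 3 → ℝ) :
    u ⨯₃ (x ⨯₃ y) = (u ⬝ᵥ y) • x - (u ⬝ᵥ x) • y := by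
  funext i
  fin_cases i <;>
    simp [cross_apply, dotProduct, Fin.sum_univ_three] <;> ring

lemma my_decomp (v w x : Fin 3 → ℝ) (h1 : v ⬝ᵥ v = 1) (h2 : w ⬝ᵥ w = 1)
    (h3 : v ⬝ᵥ w = 0) :
    x = (x ⬝ᵥ v) • v + (x ⬝ᵥ w) • w + (x ⬝ᵥ (v ⨯₃ w)) • (v ⨯₃ w) := by
  have hcc : (v ⨯₃ w) ⬝ᵥ (v ⨯₃ w) = 1 := by
    rw [cross_dot_cross, h1, h2, h3]; ring
  have e1 : (v ⨯₃ w) ⨯₃ (x ⨯₃ (v ⨯₃ w)) = x - ((v ⨯₃ w) ⬝ᵥ x) • (v ⨯₃ w) := by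
    rw [my_bac_cab, hcc, one_smul]
  have e2 : x ⨯₃ (v ⨯₃ w) = (x ⬝ᵥ w) • v - (x ⬝ᵥ v) • w := my_bac_cab x v w
  have e3 : (v ⨯₃ w) ⨯₃ v = w := by
    rw [← cross_anticomm v (v ⨯₃ w), my_bac_cab, h1, h3]; simp
  have e4 : (v ⨯₃ w) ⨯₃ w = -v := by
    rw [← cross_anticomm w (v ⨯₃ w), my_bac_cab, h2, dotProduct_comm w v, h3]; simp
  have e5 : (v ⨯₃ w) ⨯₃ (x ⨯₃ (v ⨯₃ w)) = (x ⬝ᵥ w) • w + (x ⬝ᵥ v) • v := by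
    rw [e2, map_sub, LinearMap.map_smul, LinearMap.map_smul, e3, e4, smul_neg]
    abel
  rw [e5] at e1
  have h6 : x = (x ⬝ᵥ w) • w + (x ⬝ᵥ v) • v + ((v ⨯₃ w) ⬝ᵥ x) • (v ⨯₃ w) :=
    sub_eq_iff_eq_add.mp e1.symm
  calc x = (x ⬝ᵥ w) • w + (x ⬝ᵥ v) • v + ((v ⨯₃ w) ⬝ᵥ x) • (v ⨯₃ w) := h6
    _ = _ := by rw [dotProduct_comm (v ⨯₃ w) x]; abel

lemma my_hasDerivAt_dot {f g : ℝ → Fin 3 → ℝ} {f' g' : Fin 3 → ℝ} {t : ℝ}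
    (hf : HasDerivAt f f' t) (hg : HasDerivAt g g' t) :
    HasDerivAt (fun s => f s ⬝ᵥ g s) (f' ⬝ᵥ g t + f t ⬝ᵥ g') t := by
  have hfi := fun i => hasDerivAt_pi.1 hf i
  have hgi := fun i => hasDerivAt_pi.1 hg i
  have : HasDerivAt (fun s => f s 0 * g s 0 + f s 1 * g s 1 + f s 2 * g s 2)
      ((f' 0 * g t 0 + f t 0 * g' 0) + (f' 1 * g t 1 + f t 1 * g' 1)
        + (f' 2 * g t 2 + f t 2 * g' 2)) t :=
    (((hfi 0).mul (hgi 0)).add ((hfi 1).mul (hgi 1))).add ((hfi 2).mul (hgi 2))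
  convert this using 1
  · funext s; simp [dotProduct, Fin.sum_univ_three]
  · simp [dotProduct, Fin.sum_univ_three]; ring


/-- Derivative and singular points of the parallel curve P = γ + λ v. -/
theorem parallel_curve_deriv
    (γ v w : ℝ → Fin 3 → ℝ)
    (hγ : ContDiff ℝ (⊤ : ℕ∞) γ) (hv : ContDiff ℝ (⊤ : ℕ∞) v) (hw : ContDiff ℝ (⊤ : ℕ∞) w)
    (hu₁ : ∀ t, v t ⬝ᵥ v t = 1) (hu₂ : ∀ t, w t ⬝ᵥ w t = 1)
    (horth : ∀ t, v t ⬝ᵥ w t = 0)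
    (ht₁ : ∀ t, deriv γ t ⬝ᵥ v t = 0) (ht₂ : ∀ t, deriv γ t ⬝ᵥ w t = 0)
    (μ : ℝ → Fin 3 → ℝ) (hμ : ∀ t, μ t = v t ⨯₃ w t)
    (ℓ' m' n' α : ℝ → ℝ)
    (hℓ : ∀ t, ℓ' t = deriv v t ⬝ᵥ w t)
    (hm : ∀ t, m' t = deriv v t ⬝ᵥ μ t)
    (hn : ∀ t, n' t = deriv w t ⬝ᵥ μ t)
    (hα : ∀ t, α t = deriv γ t ⬝ᵥ μ t)
    (lam : ℝ) (hlam : lam ≠ 0)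
    (P : ℝ → Fin 3 → ℝ) (hP : ∀ t, P t = γ t + lam • v t) :
    ∀ t, deriv P t = (lam * ℓ' t) • w t + (α t + lam * m' t) • μ t ∧
      deriv P t ⬝ᵥ v t = 0 ∧
      (deriv P t = 0 ↔ ℓ' t = 0 ∧ α t + lam * m' t = 0) := by
  intro t
  have hdγ : HasDerivAt γ (deriv γ t) t := (hγ.differentiable (by simp) t).hasDerivAt
  have hdv : HasDerivAt v (deriv v t) t := (hv.differentiable (by simp) t).hasDerivAt
  -- deriv v t ⬝ᵥ v t = 0
  have hvv : deriv v t ⬝ᵥ v t = 0 := by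
    have h1 : HasDerivAt (fun s => v s ⬝ᵥ v s)
        (deriv v t ⬝ᵥ v t + v t ⬝ᵥ deriv v t) t := my_hasDerivAt_dot hdv hdv
    have h2 : (fun s => v s ⬝ᵥ v s) = fun _ => (1 : ℝ) := funext hu₁
    rw [h2] at h1
    have h3 := h1.unique (hasDerivAt_const t 1)
    rw [dotProduct_comm (v t) (deriv v t)] at h3
    linarith
  -- deriv P
  have hPd : deriv P t = deriv γ t + lam • deriv v t := by
    have h1 : HasDerivAt P (deriv γ t + lam • deriv v t) t := by
      have := hdγ.add (hdv.const_smul lam)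
      rw [show P = γ + lam • v from funext fun s => by rw [hP s]; rfl]
      exact this
    exact h1.deriv
  set x := deriv P t with hx
  have hxv : x ⬝ᵥ v t = 0 := by
    rw [hPd, add_dotProduct, smul_dotProduct, ht₁, hvv]; simp
  have hxw : x ⬝ᵥ w t = lam * ℓ' t := by
    rw [hPd, add_dotProduct, smul_dotProduct, ht₂, hℓ]; simp
  have hxμ : x ⬝ᵥ μ t = α t + lam * m' t := by
    rw [hPd, add_dotProduct, smul_dotProduct, ← hα, ← hm]; simp
  have hdec : x = (lam * ℓ' t) • w t + (α t + lam * m' t) • μ t := by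
    have := my_decomp (v t) (w t) x (hu₁ t) (hu₂ t) (horth t)
    rw [← hμ t, hxv, hxw, hxμ] at this
    simpa using this
  refine ⟨hdec, hxv, ?_, ?_⟩
  · intro h0
    have hw0 : (0 : Fin 3 → ℝ) ⬝ᵥ w t = ((lam * ℓ' t) • w t + (α t + lam * m' t) • μ t) ⬝ᵥ w t := by
      rw [← hdec, ← h0]
    rw [zero_dotProduct, add_dotProduct, smul_dotProduct, smul_dotProduct, hu₂,
      hμ, dotProduct_comm, dot_cross_self] at hw0
    have hℓ0 : ℓ' t = 0 := by
      have := hw0.symm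
      simp at this
      rcases this with h | h
      · exact (hlam h).elim
      · exact h
    refine ⟨hℓ0, ?_⟩
    have hμ0 : (0 : Fin 3 → ℝ) ⬝ᵥ μ t = ((lam * ℓ' t) • w t + (α t + lam * m' t) • μ t) ⬝ᵥ μ t := by
      rw [← hdec, ← h0]
    have hμμ : μ t ⬝ᵥ μ t = 1 := by
      rw [hμ, cross_dot_cross, hu₁, hu₂, horth]; ring
    have hwμ : w t ⬝ᵥ μ t = 0 := by rw [hμ]; exact dot_cross_self (v t) (w t)
    rw [zero_dotProduct, add_dotProduct, smul_dotProduct, smul_dotProduct, hμμ, hwμ] at hμ0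
    simpa using hμ0.symm
  · rintro ⟨h1, h2⟩
    rw [hdec, h1, h2]
    simp
end

section
/- Let (γ, v, w) be a framed curve with curvature (ℓ̄, m̄, n̄, α), μ = v × w, and λ ≠ 0. There exists a smooth map n: I → S² such that (P, v, n) is a framed curve, where P(t) = γ(t) + λv(t), if and only if there exists a smooth function φ: I → ℝ such that λ ℓ̄(t) cos φ(t) − (α(t) + λ m̄(t)) sin φ(t) = 0 for all t ∈ I. -/
open Matrix Real
open scoped ENNReal NNReal Topology

lemma contDiff_top_of_hasDerivAt {f g : ℝ → ℝ} (hf : ∀ x, HasDerivAt f (g x) x)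
    (hg : ContDiff ℝ (⊤ : ℕ∞) g) : ContDiff ℝ (⊤ : ℕ∞) f := by
  rw [contDiff_infty_iff_deriv]
  refine ⟨fun x => (hf x).differentiableAt, ?_⟩
  rw [show deriv f = g from funext fun x => (hf x).deriv]
  exact hg

lemma contDiff_top_deriv {f : ℝ → ℝ} (hf : ContDiff ℝ (⊤ : ℕ∞) f) : ContDiff ℝ (⊤ : ℕ∞) (deriv f) := by
  exact (contDiff_infty_iff_deriv.mp hf).2


lemma circle_lift (a b : ℝ → ℝ) (ha : ContDiff ℝ (⊤ : ℕ∞) a) (hb : ContDiff ℝ (⊤ : ℕ∞) b)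
    (hab : ∀ t, a t ^ 2 + b t ^ 2 = 1) :
    ∃ φ : ℝ → ℝ, ContDiff ℝ (⊤ : ℕ∞) φ ∧ ∀ t, Real.cos (φ t) = a t ∧ Real.sin (φ t) = b t := by
  have hda : ContDiff ℝ (⊤ : ℕ∞) (deriv a) := contDiff_top_deriv ha
  have hdb : ContDiff ℝ (⊤ : ℕ∞) (deriv b) := contDiff_top_deriv hb
  set g : ℝ → ℝ := fun t => a t * deriv b t - b t * deriv a t with hg
  have hgc : ContDiff ℝ (⊤ : ℕ∞) g := (ha.mul hdb).sub (hb.mul hda)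
  have hgcont : Continuous g := hgc.continuous
  have h0 : a 0 ^ 2 + b 0 ^ 2 = 1 := hab 0
  obtain ⟨θ₀, hθc, hθs⟩ : ∃ θ₀, Real.cos θ₀ = a 0 ∧ Real.sin θ₀ = b 0 := by
    rcases le_or_gt 0 (b 0) with hb0 | hb0
    · refine ⟨Real.arccos (a 0), Real.cos_arccos (by nlinarith) (by nlinarith), ?_⟩
      rw [Real.sin_arccos, show 1 - a 0 ^ 2 = b 0 ^ 2 by nlinarith, Real.sqrt_sq hb0]
    · refine ⟨-Real.arccos (a 0), by
        rw [Real.cos_neg]; exact Real.cos_arccos (by nlinarith) (by nlinarith), ?_⟩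
      rw [Real.sin_neg, Real.sin_arccos, show 1 - a 0 ^ 2 = b 0 ^ 2 by nlinarith,
        Real.sqrt_sq_eq_abs, abs_of_neg hb0]
      ring
  set φ : ℝ → ℝ := fun t => θ₀ + ∫ s in (0:ℝ)..t, g s with hφdef
  have hφd : ∀ t, HasDerivAt φ (g t) t := fun t =>
    ((hgcont.integral_hasStrictDerivAt 0 t).hasDerivAt).const_add θ₀
  have hφsmooth : ContDiff ℝ (⊤ : ℕ∞) φ := contDiff_top_of_hasDerivAt hφd hgc
  have hab' : ∀ t, a t * deriv a t + b t * deriv b t = 0 := by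
    intro t
    have ha' := (ha.differentiable (by simp) t).hasDerivAt
    have hb' := (hb.differentiable (by simp) t).hasDerivAt
    have h1 : HasDerivAt (fun s => a s ^ 2 + b s ^ 2)
        (2 * a t * deriv a t + 2 * b t * deriv b t) t := by
      have := (ha'.pow 2).add (hb'.pow 2)
      refine this.congr_deriv (Eq.symm ?_)
      push_cast; ring
    have h2 : HasDerivAt (fun s => a s ^ 2 + b s ^ 2) 0 t := by
      have he : (fun s => a s ^ 2 + b s ^ 2) = fun _ => (1:ℝ) := funext hab
      rw [he]; exact hasDerivAt_const t 1
    have := h1.unique h2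
    nlinarith [this]
  set ψ : ℝ → ℝ := fun t => a t * Real.cos (φ t) + b t * Real.sin (φ t) with hψdef
  have hψd : ∀ t, HasDerivAt ψ 0 t := by
    intro t
    have ha' := (ha.differentiable (by simp) t).hasDerivAt
    have hb' := (hb.differentiable (by simp) t).hasDerivAt
    have hc : HasDerivAt (fun s => Real.cos (φ s)) (-Real.sin (φ t) * g t) t :=
      (Real.hasDerivAt_cos (φ t)).comp t (hφd t)
    have hs : HasDerivAt (fun s => Real.sin (φ s)) (Real.cos (φ t) * g t) t :=
      (Real.hasDerivAt_sin (φ t)).comp t (hφd t)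
    have H := (ha'.mul hc).add (hb'.mul hs)
    refine H.congr_deriv (Eq.symm ?_)
    simp only [hg]
    linear_combination (-(Real.cos (φ t) * a t + Real.sin (φ t) * b t)) * hab' t +
      (Real.cos (φ t) * deriv a t + Real.sin (φ t) * deriv b t) * hab t
  have hψconst : ∀ t, ψ t = ψ 0 :=
    fun t => is_const_of_deriv_eq_zero (fun s => (hψd s).differentiableAt)
      (fun s => (hψd s).deriv) t 0
  have hφ0 : φ 0 = θ₀ := by simp [hφdef]
  have hψ0 : ψ 0 = 1 := by
    simp only [hψdef, hφ0, hθc, hθs]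
    nlinarith [hab 0]
  refine ⟨φ, hφsmooth, fun t => ?_⟩
  have h1 : a t * Real.cos (φ t) + b t * Real.sin (φ t) = 1 := (hψconst t).trans hψ0
  have h2 := hab t
  have h3 := Real.sin_sq_add_cos_sq (φ t)
  constructor <;> nlinarith [sq_nonneg (a t - Real.cos (φ t)), sq_nonneg (b t - Real.sin (φ t))]
lemma bac_cab (a b c : Fin 3 → ℝ) : a ⨯₃ (b ⨯₃ c) = (a ⬝ᵥ c) • b - (a ⬝ᵥ b) • c := by
  funext i
  fin_cases i <;>
    simp [cross_apply, dotProduct, Fin.sum_univ_three] <;> ring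

lemma contDiff_cross {f g : ℝ → Fin 3 → ℝ} (hf : ContDiff ℝ (⊤ : ℕ∞) f) (hg : ContDiff ℝ (⊤ : ℕ∞) g) :
    ContDiff ℝ (⊤ : ℕ∞) fun t => f t ⨯₃ g t := by
  have c : ∀ i, ContDiff ℝ (⊤ : ℕ∞) fun t => f t i := contDiff_pi.mp hf
  have d : ∀ i, ContDiff ℝ (⊤ : ℕ∞) fun t => g t i := contDiff_pi.mp hg
  rw [contDiff_pi]
  intro i
  fin_cases i <;> simp only [cross_apply, Matrix.cons_val_zero, Matrix.cons_val_one,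
    Matrix.head_cons, Matrix.cons_val_two, Matrix.tail_cons]
  · exact ((c 1).mul (d 2)).sub ((c 2).mul (d 1))
  · exact ((c 2).mul (d 0)).sub ((c 0).mul (d 2))
  · exact ((c 0).mul (d 1)).sub ((c 1).mul (d 0))

lemma contDiff_dot {f g : ℝ → Fin 3 → ℝ} (hf : ContDiff ℝ (⊤ : ℕ∞) f) (hg : ContDiff ℝ (⊤ : ℕ∞) g) :
    ContDiff ℝ (⊤ : ℕ∞) fun t => f t ⬝ᵥ g t := by
  have c : ∀ i, ContDiff ℝ (⊤ : ℕ∞) fun t => f t i := contDiff_pi.mp hf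
  have d : ∀ i, ContDiff ℝ (⊤ : ℕ∞) fun t => g t i := contDiff_pi.mp hg
  simp only [dotProduct, Fin.sum_univ_three]
  exact (((c 0).mul (d 0)).add ((c 1).mul (d 1))).add ((c 2).mul (d 2))

lemma hasDerivAt_comp_apply {f : ℝ → Fin 3 → ℝ} (hf : ContDiff ℝ (⊤ : ℕ∞) f) (t : ℝ) (i : Fin 3) :
    HasDerivAt (fun s => f s i) (deriv f t i) t :=
  hasDerivAt_pi.mp ((hf.differentiable (by simp) t).hasDerivAt) i

lemma hasDerivAt_dot {f g : ℝ → Fin 3 → ℝ} (hf : ContDiff ℝ (⊤ : ℕ∞) f) (hg : ContDiff ℝ (⊤ : ℕ∞) g) (t : ℝ) :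
    HasDerivAt (fun s => f s ⬝ᵥ g s) (deriv f t ⬝ᵥ g t + f t ⬝ᵥ deriv g t) t := by
  have h : ∀ i : Fin 3, HasDerivAt (fun s => f s i * g s i)
      (deriv f t i * g t i + f t i * deriv g t i) t :=
    fun i => (hasDerivAt_comp_apply hf t i).mul (hasDerivAt_comp_apply hg t i)
  have H := ((h 0).add (h 1)).add (h 2)
  simp only [dotProduct, Fin.sum_univ_three]
  refine H.congr_deriv (Eq.symm ?_)
  ring

lemma span_three (v w x : Fin 3 → ℝ) (hv : v ⬝ᵥ v = 1) (hw : w ⬝ᵥ w = 1)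
    (hvw : v ⬝ᵥ w = 0) (hx : v ⬝ᵥ x = 0) :
    x = (x ⬝ᵥ w) • w + (x ⬝ᵥ (v ⨯₃ w)) • (v ⨯₃ w) := by
  set μ := v ⨯₃ w with hμ
  have hμμ : μ ⬝ᵥ μ = 1 := by
    rw [hμ, cross_dot_cross, hv, hw, hvw]; ring
  have hwμ : w ⬝ᵥ μ = 0 := dot_cross_self v w
  have hvμ : v ⬝ᵥ μ = 0 := dot_self_cross v w
  set z := x - (x ⬝ᵥ w) • w - (x ⬝ᵥ μ) • μ with hz
  have hzv : z ⬝ᵥ v = 0 := by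
    simp only [hz, sub_dotProduct, smul_dotProduct, smul_eq_mul]
    rw [dotProduct_comm w v, hvw, dotProduct_comm μ v, hvμ, dotProduct_comm x v, hx]
    ring
  have hzw : z ⬝ᵥ w = 0 := by
    simp only [hz, sub_dotProduct, smul_dotProduct, smul_eq_mul]
    rw [hw, dotProduct_comm μ w, hwμ]
    ring
  have hzμ : z ⬝ᵥ μ = 0 := by
    simp only [hz, sub_dotProduct, smul_dotProduct, smul_eq_mul]
    rw [hμμ, hwμ]
    ring
  have hcross : z ⨯₃ μ = 0 := by
    rw [hμ, bac_cab, hzw, hzv]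
    simp
  have hzz : μ ⨯₃ (μ ⨯₃ z) = (μ ⬝ᵥ z) • μ - (μ ⬝ᵥ μ) • z := bac_cab μ μ z
  have hμz : μ ⨯₃ z = 0 := by
    have := cross_anticomm z μ
    rw [hcross] at this
    simpa using this.symm
  rw [hμz, hμμ, dotProduct_comm μ z, hzμ] at hzz
  simp only [map_zero, zero_smul, one_smul, zero_sub] at hzz
  have hz0 : z = 0 := by
    have := hzz.symm
    simpa [neg_eq_zero] using congrArg Neg.neg this
  have : x - (x ⬝ᵥ w) • w - (x ⬝ᵥ μ) • μ = 0 := hz0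
  linear_combination (norm := abel) this


open Matrix Real

/-- Existence of a framed-curve structure (P, v, n) on the parallel curve P = γ + λ v
is equivalent to the existence of a smooth angle function φ with
λ ℓ̄ cos φ − (α + λ m̄) sin φ = 0. -/
theorem parallel_curve_framed_iff
    (γ v w : ℝ → Fin 3 → ℝ)
    (hγ : ContDiff ℝ (⊤ : ℕ∞) γ) (hv : ContDiff ℝ (⊤ : ℕ∞) v) (hw : ContDiff ℝ (⊤ : ℕ∞) w)
    (hu₁ : ∀ t, v t ⬝ᵥ v t = 1) (hu₂ : ∀ t, w t ⬝ᵥ w t = 1)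
    (horth : ∀ t, v t ⬝ᵥ w t = 0)
    (ht₁ : ∀ t, deriv γ t ⬝ᵥ v t = 0) (ht₂ : ∀ t, deriv γ t ⬝ᵥ w t = 0)
    (μ : ℝ → Fin 3 → ℝ) (hμ : ∀ t, μ t = v t ⨯₃ w t)
    (ℓ' m' n' α : ℝ → ℝ)
    (hℓ : ∀ t, ℓ' t = deriv v t ⬝ᵥ w t)
    (hm : ∀ t, m' t = deriv v t ⬝ᵥ μ t)
    (hn : ∀ t, n' t = deriv w t ⬝ᵥ μ t)
    (hα : ∀ t, α t = deriv γ t ⬝ᵥ μ t)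
    (lam : ℝ) (hlam : lam ≠ 0)
    (P : ℝ → Fin 3 → ℝ) (hP : ∀ t, P t = γ t + lam • v t) :
    (∃ n : ℝ → Fin 3 → ℝ, ContDiff ℝ (⊤ : ℕ∞) n ∧ ∀ t, n t ⬝ᵥ n t = 1 ∧
        v t ⬝ᵥ n t = 0 ∧ deriv P t ⬝ᵥ v t = 0 ∧ deriv P t ⬝ᵥ n t = 0) ↔
    (∃ φ : ℝ → ℝ, ContDiff ℝ (⊤ : ℕ∞) φ ∧
        ∀ t, lam * ℓ' t * cos (φ t) - (α t + lam * m' t) * sin (φ t) = 0) := by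
  have hμs : ContDiff ℝ (⊤ : ℕ∞) μ := by
    have h : μ = fun t => v t ⨯₃ w t := funext hμ
    rw [h]; exact contDiff_cross hv hw
  have hμμ : ∀ t, μ t ⬝ᵥ μ t = 1 := by
    intro t; rw [hμ t, cross_dot_cross, hu₁ t, hu₂ t, horth t]; ring
  have hvμ : ∀ t, v t ⬝ᵥ μ t = 0 := fun t => by rw [hμ t]; exact dot_self_cross _ _
  have hwμ : ∀ t, w t ⬝ᵥ μ t = 0 := fun t => by rw [hμ t]; exact dot_cross_self _ _
  have hPd : ∀ t, deriv P t = deriv γ t + lam • deriv v t := by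
    intro t
    have h1 : HasDerivAt P (deriv γ t + lam • deriv v t) t := by
      have h2 := ((hγ.differentiable (by simp) t).hasDerivAt).add
        (((hv.differentiable (by simp) t).hasDerivAt).const_smul lam)
      have h3 : P = fun s => γ s + lam • v s := funext hP
      rw [h3]
      exact h2
    exact h1.deriv
  have hvv : ∀ t, deriv v t ⬝ᵥ v t = 0 := by
    intro t
    have h1 := hasDerivAt_dot hv hv t
    have h2 : HasDerivAt (fun s => v s ⬝ᵥ v s) 0 t := by
      have h : (fun s => v s ⬝ᵥ v s) = fun _ => (1:ℝ) := funext hu₁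
      rw [h]; exact hasDerivAt_const t 1
    have h3 := h1.unique h2
    have h4 : v t ⬝ᵥ deriv v t = deriv v t ⬝ᵥ v t := dotProduct_comm _ _
    linarith [h3, h4]
  have hPv : ∀ t, deriv P t ⬝ᵥ v t = 0 := by
    intro t
    rw [hPd t, add_dotProduct, smul_dotProduct, ht₁ t, hvv t]
    simp
  have hPw : ∀ t, deriv P t ⬝ᵥ w t = lam * ℓ' t := by
    intro t
    rw [hPd t, add_dotProduct, smul_dotProduct, ht₂ t, hℓ t]
    simp
  have hPμ : ∀ t, deriv P t ⬝ᵥ μ t = α t + lam * m' t := by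
    intro t
    rw [hPd t, add_dotProduct, smul_dotProduct, hα t, hm t]
    simp
  constructor
  · rintro ⟨n, hns, hn'⟩
    have hspan : ∀ t, n t = (n t ⬝ᵥ w t) • w t + (n t ⬝ᵥ μ t) • μ t := by
      intro t
      have h := span_three (v t) (w t) (n t) (hu₁ t) (hu₂ t) (horth t) ((hn' t).2.1)
      rw [← hμ t] at h
      exact h
    have hdotn : ∀ (x : Fin 3 → ℝ) (t : ℝ), x ⬝ᵥ n t =
        (x ⬝ᵥ w t) * (n t ⬝ᵥ w t) + (x ⬝ᵥ μ t) * (n t ⬝ᵥ μ t) := by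
      intro x t
      conv_lhs => rw [hspan t]
      simp only [dotProduct_add, dotProduct_smul, smul_eq_mul]
      ring
    have hab : ∀ t, (n t ⬝ᵥ w t) ^ 2 + (n t ⬝ᵥ μ t) ^ 2 = 1 := by
      intro t
      have h1 : n t ⬝ᵥ n t = 1 := (hn' t).1
      have h2 := hdotn (n t) t
      linear_combination h1 - h2
    obtain ⟨ψ, hψs, hψ⟩ := circle_lift (fun t => n t ⬝ᵥ w t) (fun t => n t ⬝ᵥ μ t)
      (contDiff_dot hns hw) (contDiff_dot hns hμs) hab
    refine ⟨fun t => -ψ t, hψs.neg, fun t => ?_⟩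
    rw [Real.cos_neg, Real.sin_neg, (hψ t).1, (hψ t).2]
    have h0 : deriv P t ⬝ᵥ n t = 0 := (hn' t).2.2.2
    have hdd := hdotn (deriv P t) t
    linear_combination h0 - hdd - (n t ⬝ᵥ w t) * hPw t - (n t ⬝ᵥ μ t) * hPμ t
  · rintro ⟨φ, hφs, hφeq⟩
    refine ⟨fun t => Real.cos (φ t) • w t - Real.sin (φ t) • μ t, ?_, fun t => ?_⟩
    · exact ((Real.contDiff_cos.comp hφs).smul hw).sub
        ((Real.contDiff_sin.comp hφs).smul hμs)
    refine ⟨?_, ?_, hPv t, ?_⟩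
    · simp only [dotProduct_sub, sub_dotProduct, dotProduct_smul, smul_dotProduct,
        smul_eq_mul]
      rw [hu₂ t, hμμ t, hwμ t, dotProduct_comm (μ t) (w t), hwμ t]
      nlinarith [Real.sin_sq_add_cos_sq (φ t)]
    · simp only [dotProduct_sub, dotProduct_smul, smul_eq_mul]
      rw [horth t, hvμ t]
      ring
    · simp only [dotProduct_sub, dotProduct_smul, smul_eq_mul]
      rw [hPw t, hPμ t]
      linear_combination hφeq t
end

section
/- If {v, w, μ} is a Bishop frame along the framed curve γ (ℓ̄ ≡ 0), then no singular point of the normal surface NS(t, λ) = γ(t) + λ v(t) is a cross cap, since det(NS_λ, NS_{tλ}, NS_{tt}) vanishes at every singular point. -/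
open Matrix

private lemma deriv_dot3 {f g : ℝ → Fin 3 → ℝ} (hf : Differentiable ℝ f)
    (hg : Differentiable ℝ g) (t : ℝ) :
    deriv (fun s => f s ⬝ᵥ g s) t = deriv f t ⬝ᵥ g t + f t ⬝ᵥ deriv g t := by
  have Hf : ∀ i, HasDerivAt (fun s => f s i) (deriv f t i) t :=
    hasDerivAt_pi.mp (hf t).hasDerivAt
  have Hg : ∀ i, HasDerivAt (fun s => g s i) (deriv g t i) t :=
    hasDerivAt_pi.mp (hg t).hasDerivAt
  have H : HasDerivAt (fun s => f s ⬝ᵥ g s)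
      (∑ i, (deriv f t i * g t i + f t i * deriv g t i)) t := by
    simp only [dotProduct]
    exact HasDerivAt.fun_sum fun i _ => (Hf i).mul (Hg i)
  rw [H.deriv, dotProduct, dotProduct, ← Finset.sum_add_distrib]

private lemma deriv_dot3_const {f g : ℝ → Fin 3 → ℝ} (c : ℝ) (hf : Differentiable ℝ f)
    (hg : Differentiable ℝ g) (h : ∀ t, f t ⬝ᵥ g t = c) (t : ℝ) :
    deriv f t ⬝ᵥ g t + f t ⬝ᵥ deriv g t = 0 := by
  rw [← deriv_dot3 hf hg t, show (fun s => f s ⬝ᵥ g s) = fun _ => c from funext h,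
    deriv_const]

private lemma deriv_affine (c d : Fin 3 → ℝ) (x : ℝ) :
    deriv (fun l : ℝ => c + l • d) x = d := by
  have h : HasDerivAt (fun l : ℝ => c + l • d) ((1 : ℝ) • d) x :=
    (((hasDerivAt_id x).smul_const d).const_add c)
  rw [h.deriv, one_smul]


open Matrix

private lemma key_det (a b p q r g1 g2 : Fin 3 → ℝ) (L : ℝ)
    (h1 : a ⬝ᵥ a = 1) (h2 : b ⬝ᵥ b = 1) (h3 : a ⬝ᵥ b = 0)
    (h4 : p ⬝ᵥ a + a ⬝ᵥ p = 0) (h5 : p ⬝ᵥ b = 0)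
    (h6 : g1 ⬝ᵥ a = 0) (h7 : g1 ⬝ᵥ b = 0)
    (h10 : g2 ⬝ᵥ b + g1 ⬝ᵥ q = 0) (h12 : r ⬝ᵥ b + p ⬝ᵥ q = 0)
    (h13 : g1 ⬝ᵥ (a ⨯₃ b) + L * (p ⬝ᵥ (a ⨯₃ b)) = 0) :
    Matrix.det (Matrix.of ![a, p, g2 + L • r]) = 0 := by
  simp only [dotProduct, cross_apply, Fin.sum_univ_three, Matrix.cons_val_zero,
    Matrix.cons_val_one, Matrix.head_cons, Matrix.cons_val_two, Matrix.tail_cons]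
    at h1 h2 h3 h4 h5 h6 h7 h10 h12 h13
  rw [Matrix.det_fin_three]
  simp only [Matrix.of_apply, Matrix.cons_val', Matrix.cons_val_zero, Matrix.cons_val_one,
    Matrix.head_cons, Matrix.cons_val_two, Matrix.tail_cons, Matrix.empty_val',
    Matrix.cons_val_fin_one, Matrix.head_fin_const, Pi.add_apply, Pi.smul_apply, smul_eq_mul]
  linear_combination
        (-(a 0 * (p 1 * (g2 2 + L * r 2) - p 2 * (g2 1 + L * r 1)) + a 1 * (p 2 * (g2 0 + L * r 0) - p 0 * (g2 2 + L * r 2)) + a 2 * (p 0 * (g2 1 + L * r 1) - p 1 * (g2 0 + L * r 0))) * (b 0 * b 0 + b 1 * b 1 + b 2 * b 2) + (-(p 0 * (a 1 * b 2 - a 2 * b 1) + p 1 * (a 2 * b 0 - a 0 * b 2) + p 2 * (a 0 * b 1 - a 1 * b 0)) * (a 0 * a 0 + a 1 * a 1 + a 2 * a 2)) * (b 0 * b 0 + b 1 * b 1 + b 2 * b 2) * ((g1 0 + L * p 0) * q 0 + (g1 1 + L * p 1) * q 1 + (g1 2 + L * p 2) * q 2)) * h1 +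
        (-(a 0 * (p 1 * (g2 2 + L * r 2) - p 2 * (g2 1 + L * r 1)) + a 1 * (p 2 * (g2 0 + L * r 0) - p 0 * (g2 2 + L * r 2)) + a 2 * (p 0 * (g2 1 + L * r 1) - p 1 * (g2 0 + L * r 0))) + (-(p 0 * (a 1 * b 2 - a 2 * b 1) + p 1 * (a 2 * b 0 - a 0 * b 2) + p 2 * (a 0 * b 1 - a 1 * b 0)) * (a 0 * a 0 + a 1 * a 1 + a 2 * a 2)) * ((g1 0 + L * p 0) * q 0 + (g1 1 + L * p 1) * q 1 + (g1 2 + L * p 2) * q 2)) * h2 +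
        ((p 0 * (a 1 * b 2 - a 2 * b 1) + p 1 * (a 2 * b 0 - a 0 * b 2) + p 2 * (a 0 * b 1 - a 1 * b 0)) * ((g2 0 + L * r 0) * a 0 + (g2 1 + L * r 1) * a 1 + (g2 2 + L * r 2) * a 2) + (a 0 * (p 1 * (g2 2 + L * r 2) - p 2 * (g2 1 + L * r 1)) + a 1 * (p 2 * (g2 0 + L * r 0) - p 0 * (g2 2 + L * r 2)) + a 2 * (p 0 * (g2 1 + L * r 1) - p 1 * (g2 0 + L * r 0))) * (a 0 * b 0 + a 1 * b 1 + a 2 * b 2) - (-(p 0 * (a 1 * b 2 - a 2 * b 1) + p 1 * (a 2 * b 0 - a 0 * b 2) + p 2 * (a 0 * b 1 - a 1 * b 0)) * (a 0 * a 0 + a 1 * a 1 + a 2 * a 2)) * (a 0 * b 0 + a 1 * b 1 + a 2 * b 2) * ((g1 0 + L * p 0) * q 0 + (g1 1 + L * p 1) * q 1 + (g1 2 + L * p 2) * q 2)) * h3 +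
        ((-(a 0 * b 0 + a 1 * b 1 + a 2 * b 2) * ((g2 0 + L * r 0) * (a 1 * b 2 - a 2 * b 1) + (g2 1 + L * r 1) * (a 2 * b 0 - a 0 * b 2) + (g2 2 + L * r 2) * (a 0 * b 1 - a 1 * b 0)) + (-(p 0 * (a 1 * b 2 - a 2 * b 1) + p 1 * (a 2 * b 0 - a 0 * b 2) + p 2 * (a 0 * b 1 - a 1 * b 0)) * (a 0 * a 0 + a 1 * a 1 + a 2 * a 2)) * L * ((a 0 * b 0 + a 1 * b 1 + a 2 * b 2) * (b 0 * q 0 + b 1 * q 1 + b 2 * q 2) - (b 0 * b 0 + b 1 * b 1 + b 2 * b 2) * (a 0 * q 0 + a 1 * q 1 + a 2 * q 2)))/2) * h4 +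
        ((a 0 * a 0 + a 1 * a 1 + a 2 * a 2) * ((g2 0 + L * r 0) * (a 1 * b 2 - a 2 * b 1) + (g2 1 + L * r 1) * (a 2 * b 0 - a 0 * b 2) + (g2 2 + L * r 2) * (a 0 * b 1 - a 1 * b 0)) - (-(p 0 * (a 1 * b 2 - a 2 * b 1) + p 1 * (a 2 * b 0 - a 0 * b 2) + p 2 * (a 0 * b 1 - a 1 * b 0)) * (a 0 * a 0 + a 1 * a 1 + a 2 * a 2)) * L * ((a 0 * a 0 + a 1 * a 1 + a 2 * a 2) * (b 0 * q 0 + b 1 * q 1 + b 2 * q 2) - (a 0 * b 0 + a 1 * b 1 + a 2 * b 2) * (a 0 * q 0 + a 1 * q 1 + a 2 * q 2))) * h5 +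
        ((-(p 0 * (a 1 * b 2 - a 2 * b 1) + p 1 * (a 2 * b 0 - a 0 * b 2) + p 2 * (a 0 * b 1 - a 1 * b 0)) * (a 0 * a 0 + a 1 * a 1 + a 2 * a 2)) * ((a 0 * b 0 + a 1 * b 1 + a 2 * b 2) * (b 0 * q 0 + b 1 * q 1 + b 2 * q 2) - (b 0 * b 0 + b 1 * b 1 + b 2 * b 2) * (a 0 * q 0 + a 1 * q 1 + a 2 * q 2))) * h6 +
        (-(-(p 0 * (a 1 * b 2 - a 2 * b 1) + p 1 * (a 2 * b 0 - a 0 * b 2) + p 2 * (a 0 * b 1 - a 1 * b 0)) * (a 0 * a 0 + a 1 * a 1 + a 2 * a 2)) * ((a 0 * a 0 + a 1 * a 1 + a 2 * a 2) * (b 0 * q 0 + b 1 * q 1 + b 2 * q 2) - (a 0 * b 0 + a 1 * b 1 + a 2 * b 2) * (a 0 * q 0 + a 1 * q 1 + a 2 * q 2))) * h7 +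
        (-(p 0 * (a 1 * b 2 - a 2 * b 1) + p 1 * (a 2 * b 0 - a 0 * b 2) + p 2 * (a 0 * b 1 - a 1 * b 0)) * (a 0 * a 0 + a 1 * a 1 + a 2 * a 2)) * h10 +
        ((-(p 0 * (a 1 * b 2 - a 2 * b 1) + p 1 * (a 2 * b 0 - a 0 * b 2) + p 2 * (a 0 * b 1 - a 1 * b 0)) * (a 0 * a 0 + a 1 * a 1 + a 2 * a 2)) * L) * h12 +
        (-(-(p 0 * (a 1 * b 2 - a 2 * b 1) + p 1 * (a 2 * b 0 - a 0 * b 2) + p 2 * (a 0 * b 1 - a 1 * b 0)) * (a 0 * a 0 + a 1 * a 1 + a 2 * a 2)) * ((a 1 * b 2 - a 2 * b 1) * q 0 + (a 2 * b 0 - a 0 * b 2) * q 1 + (a 0 * b 1 - a 1 * b 0) * q 2)) * h13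

/-- For a Bishop frame (ℓ̄ ≡ 0), det(NS_λ, NS_{tλ}, NS_{tt}) vanishes at every
singular point of the normal surface, so no singular point is a cross cap. -/
theorem normal_surface_bishop_no_cross_cap
    (γ v w : ℝ → Fin 3 → ℝ)
    (hγ : ContDiff ℝ (⊤ : ℕ∞) γ) (hv : ContDiff ℝ (⊤ : ℕ∞) v) (hw : ContDiff ℝ (⊤ : ℕ∞) w)
    (hu₁ : ∀ t, v t ⬝ᵥ v t = 1) (hu₂ : ∀ t, w t ⬝ᵥ w t = 1)
    (horth : ∀ t, v t ⬝ᵥ w t = 0)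
    (ht₁ : ∀ t, deriv γ t ⬝ᵥ v t = 0) (ht₂ : ∀ t, deriv γ t ⬝ᵥ w t = 0)
    (μ : ℝ → Fin 3 → ℝ) (hμ : ∀ t, μ t = v t ⨯₃ w t)
    (ℓ' m' n' α : ℝ → ℝ)
    (hℓ : ∀ t, ℓ' t = deriv v t ⬝ᵥ w t)
    (hm : ∀ t, m' t = deriv v t ⬝ᵥ μ t)
    (hn : ∀ t, n' t = deriv w t ⬝ᵥ μ t)
    (hα : ∀ t, α t = deriv γ t ⬝ᵥ μ t)
    (hBishop : ∀ t, ℓ' t = 0)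
    (NS : ℝ → ℝ → Fin 3 → ℝ) (hNS : ∀ t lam, NS t lam = γ t + lam • v t) :
    ∀ t₀ lam₀ : ℝ, lam₀ * ℓ' t₀ = 0 → α t₀ + lam₀ * m' t₀ = 0 →
      Matrix.det (Matrix.of
        ![deriv (fun l => NS t₀ l) lam₀,
          deriv (fun l => deriv (fun s => NS s l) t₀) lam₀,
          deriv (fun s => deriv (fun s' => NS s' lam₀) s) t₀]) = 0 := by
  intro t₀ lam₀ _ hsing
  have Dγ : Differentiable ℝ γ := hγ.differentiable (by simp)
  have Dv : Differentiable ℝ v := hv.differentiable (by simp)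
  have Dw : Differentiable ℝ w := hw.differentiable (by simp)
  have Ddγ : Differentiable ℝ (deriv γ) :=
    ((contDiff_infty_iff_deriv.mp (hγ.of_le (by simp))).2).differentiable (by simp)
  have Ddv : Differentiable ℝ (deriv v) :=
    ((contDiff_infty_iff_deriv.mp (hv.of_le (by simp))).2).differentiable (by simp)
  -- the three rows
  have hinner : ∀ (l : ℝ) (t : ℝ),
      deriv (fun s => NS s l) t = deriv γ t + l • deriv v t := by
    intro l t
    rw [show (fun s => NS s l) = fun s => γ s + l • v s from funext fun s => hNS s l,
      deriv_fun_add (g := fun s => l • v s) (Dγ t) ((Dv t).const_smul l), deriv_fun_const_smul l (Dv t)]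
  have hrow1 : deriv (fun l => NS t₀ l) lam₀ = v t₀ := by
    rw [show (fun l => NS t₀ l) = fun l => γ t₀ + l • v t₀ from funext fun l => hNS t₀ l,
      deriv_affine]
  have hrow2 : deriv (fun l => deriv (fun s => NS s l) t₀) lam₀ = deriv v t₀ := by
    simp only [hinner]
    rw [deriv_affine]
  have hrow3 : deriv (fun s => deriv (fun s' => NS s' lam₀) s) t₀ =
      deriv (deriv γ) t₀ + lam₀ • deriv (deriv v) t₀ := by
    simp only [hinner]
    rw [deriv_fun_add (g := fun s => lam₀ • deriv v s) (Ddγ t₀) ((Ddv t₀).const_smul lam₀), deriv_fun_const_smul lam₀ (Ddv t₀)]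
  rw [hrow1, hrow2, hrow3]
  -- the scalar relations
  have h4 : deriv v t₀ ⬝ᵥ v t₀ + v t₀ ⬝ᵥ deriv v t₀ = 0 :=
    deriv_dot3_const 1 Dv Dv hu₁ t₀
  have h5 : deriv v t₀ ⬝ᵥ w t₀ = 0 := by rw [← hℓ]; exact hBishop t₀
  have h10 : deriv (deriv γ) t₀ ⬝ᵥ w t₀ + deriv γ t₀ ⬝ᵥ deriv w t₀ = 0 :=
    deriv_dot3_const 0 Ddγ Dw ht₂ t₀
  have h12 : deriv (deriv v) t₀ ⬝ᵥ w t₀ + deriv v t₀ ⬝ᵥ deriv w t₀ = 0 :=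
    deriv_dot3_const 0 Ddv Dw (fun t => by rw [← hℓ]; exact hBishop t) t₀
  have h13 : deriv γ t₀ ⬝ᵥ (v t₀ ⨯₃ w t₀) + lam₀ * (deriv v t₀ ⬝ᵥ (v t₀ ⨯₃ w t₀)) = 0 := by
    rw [← hμ, ← hα, ← hm]; exact hsing
  exact key_det (v t₀) (w t₀) (deriv v t₀) (deriv w t₀) (deriv (deriv v) t₀)
    (deriv γ t₀) (deriv (deriv γ) t₀) lam₀ (hu₁ t₀) (hu₂ t₀) (horth t₀)
    h4 h5 (ht₁ t₀) (ht₂ t₀) h10 h12 h13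
end

section
/- Let γ be a framed curve with a Bishop frame {v, w, μ} (ℓ̄ ≡ 0) and m̄(t) ≠ 0 for all t. Then the circular evolute E(t) = γ(t) − (α(t)/m̄(t)) v(t) satisfies E'(t) = −(d/dt)(α(t)/m̄(t)) · v(t); hence E'(t)·w(t) = 0 and E'(t)·μ(t) = 0, so (E, w, μ) is a framed curve. -/
open Matrix

/-- The circular evolute E = γ − (α/m̄) v of a framed curve with a Bishop frame
satisfies E' = −(α/m̄)' v, and (E, w, μ) is a framed curve. -/
theorem circular_evolute_framed
    (γ v w : ℝ → Fin 3 → ℝ)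
    (hγ : ContDiff ℝ (⊤ : ℕ∞) γ) (hv : ContDiff ℝ (⊤ : ℕ∞) v) (hw : ContDiff ℝ (⊤ : ℕ∞) w)
    (hu₁ : ∀ t, v t ⬝ᵥ v t = 1) (hu₂ : ∀ t, w t ⬝ᵥ w t = 1)
    (horth : ∀ t, v t ⬝ᵥ w t = 0)
    (μ : ℝ → Fin 3 → ℝ) (hμ : ∀ t, μ t = v t ⨯₃ w t)
    (m' n' α : ℝ → ℝ)
    (hm' : ContDiff ℝ (⊤ : ℕ∞) m') (hn' : ContDiff ℝ (⊤ : ℕ∞) n') (hα : ContDiff ℝ (⊤ : ℕ∞) α)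
    (hdv : ∀ t, deriv v t = m' t • μ t)
    (hdw : ∀ t, deriv w t = n' t • μ t)
    (hdγ : ∀ t, deriv γ t = α t • μ t)
    (hm0 : ∀ t, m' t ≠ 0)
    (E : ℝ → Fin 3 → ℝ) (hE : ∀ t, E t = γ t - (α t / m' t) • v t) :
    ∀ t, deriv E t = (-(deriv (fun s => α s / m' s) t)) • v t ∧
      deriv E t ⬝ᵥ w t = 0 ∧ deriv E t ⬝ᵥ μ t = 0 := by
  intro t
  set f : ℝ → ℝ := fun s => α s / m' s with hfdef
  have hfc : ContDiff ℝ (⊤ : ℕ∞) f := hα.div hm' hm0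
  have hfd : HasDerivAt f (deriv f t) t :=
    (hfc.differentiable (by simp) t).hasDerivAt
  have hvd : HasDerivAt v (m' t • μ t) t := by
    have := (hv.differentiable (by simp) t).hasDerivAt
    rwa [hdv t] at this
  have hγd : HasDerivAt γ (α t • μ t) t := by
    have := (hγ.differentiable (by simp) t).hasDerivAt
    rwa [hdγ t] at this
  have hEfun : E = fun s => γ s - f s • v s := funext fun s => hE s
  have hEd : HasDerivAt E (α t • μ t - (f t • (m' t • μ t) + deriv f t • v t)) t := by
    rw [hEfun]
    exact hγd.sub (hfd.smul hvd)
  have key : α t • μ t - (f t • (m' t • μ t) + deriv f t • v t)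
      = (-(deriv f t)) • v t := by
    have : f t • (m' t • μ t) = α t • μ t := by
      rw [smul_smul, hfdef]
      simp [div_mul_cancel₀ _ (hm0 t)]
    rw [this]
    module
  rw [key] at hEd
  have hDE : deriv E t = (-(deriv f t)) • v t := hEd.deriv
  refine ⟨hDE, ?_, ?_⟩
  · rw [hDE, smul_dotProduct, horth t, smul_zero]
  · rw [hDE, smul_dotProduct, hμ t, dot_self_cross, smul_zero]
end

section
/- Let (γ, ν₁, ν₂) be a framed curve with curvature (ℓ, m, n, α) satisfying m²(t) + n²(t) ≠ 0 for all t, and fix t₀ ∈ I. The involute Inv(t) = γ(t) − (∫_{t₀}^t α ds) μ(t) satisfies Inv'(t) = (∫_{t₀}^t α ds)(m(t) ν₁(t) + n(t) ν₂(t)); hence with ξ = (n ν₁ − m ν₂)/√(m² + n²), Inv'·ξ = 0 and Inv'·μ = 0, so (Inv, ξ, μ) is a framed curve. -/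
open Matrix Real

lemma triple_expand (u v w : Fin 3 → ℝ) :
    u ⨯₃ (v ⨯₃ w) = (u ⬝ᵥ w) • v - (u ⬝ᵥ v) • w := by
  funext i; fin_cases i <;>
    simp [cross_apply, dotProduct, Fin.sum_univ_three] <;> ring

lemma HasDerivAt.cross3 {f g : ℝ → Fin 3 → ℝ} {f' g' : Fin 3 → ℝ} {t : ℝ}
    (hf : HasDerivAt f f' t) (hg : HasDerivAt g g' t) :
    HasDerivAt (fun s => f s ⨯₃ g s) (f' ⨯₃ g t + f t ⨯₃ g') t := by
  rw [hasDerivAt_pi] at hf hg ⊢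
  intro i
  fin_cases i <;>
    · simp only [cross_apply]
      simp only [Matrix.cons_val_zero, Matrix.cons_val_one, Matrix.head_cons,
        Matrix.cons_val_two, Matrix.tail_cons, Pi.add_apply]
      refine (((hf _).fun_mul (hg _)).fun_sub ((hf _).fun_mul (hg _))).congr_deriv ?_
      simp
      ring

/-- Derivative of the involute Inv(t) = γ(t) − (∫_{t₀}^t α) μ(t), and the fact
that (Inv, ξ, μ) is a framed curve. -/
theorem involute_framed
    (γ ν₁ ν₂ : ℝ → Fin 3 → ℝ)
    (hγ : ContDiff ℝ (⊤ : ℕ∞) γ) (hν₁ : ContDiff ℝ (⊤ : ℕ∞) ν₁) (hν₂ : ContDiff ℝ (⊤ : ℕ∞) ν₂)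
    (hu₁ : ∀ t, ν₁ t ⬝ᵥ ν₁ t = 1) (hu₂ : ∀ t, ν₂ t ⬝ᵥ ν₂ t = 1)
    (horth : ∀ t, ν₁ t ⬝ᵥ ν₂ t = 0)
    (μ : ℝ → Fin 3 → ℝ) (hμ : ∀ t, μ t = ν₁ t ⨯₃ ν₂ t)
    (ℓ m n α : ℝ → ℝ)
    (hℓs : ContDiff ℝ (⊤ : ℕ∞) ℓ) (hms : ContDiff ℝ (⊤ : ℕ∞) m) (hns : ContDiff ℝ (⊤ : ℕ∞) n)
    (hαs : ContDiff ℝ (⊤ : ℕ∞) α)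
    (hdν₁ : ∀ t, deriv ν₁ t = ℓ t • ν₂ t + m t • μ t)
    (hdν₂ : ∀ t, deriv ν₂ t = -ℓ t • ν₁ t + n t • μ t)
    (hdγ : ∀ t, deriv γ t = α t • μ t)
    (hmn : ∀ t, m t ^ 2 + n t ^ 2 ≠ 0)
    (t₀ : ℝ)
    (Inv : ℝ → Fin 3 → ℝ)
    (hInv : ∀ t, Inv t = γ t - (∫ s in t₀..t, α s) • μ t)
    (ξ : ℝ → Fin 3 → ℝ)
    (hξ : ∀ t, ξ t = (Real.sqrt (m t ^ 2 + n t ^ 2))⁻¹ • (n t • ν₁ t - m t • ν₂ t)) :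
    ∀ t, deriv Inv t = (∫ s in t₀..t, α s) • (m t • ν₁ t + n t • ν₂ t) ∧
      deriv Inv t ⬝ᵥ ξ t = 0 ∧ deriv Inv t ⬝ᵥ μ t = 0 := by
  intro t
  have hν₁d : HasDerivAt ν₁ (deriv ν₁ t) t :=
    ((hν₁.differentiable (by simp)) t).hasDerivAt
  have hν₂d : HasDerivAt ν₂ (deriv ν₂ t) t :=
    ((hν₂.differentiable (by simp)) t).hasDerivAt
  have hγd : HasDerivAt γ (α t • μ t) t := by
    have := ((hγ.differentiable (by simp)) t).hasDerivAt
    rwa [hdγ t] at this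
  -- helper cross identities
  have h1 : μ t ⨯₃ ν₂ t = -ν₁ t := by
    rw [hμ, ← neg_neg ((ν₁ t ⨯₃ ν₂ t) ⨯₃ ν₂ t), cross_anticomm, triple_expand,
      hu₂ t, dotProduct_comm, horth t]
    simp
  have h2 : ν₁ t ⨯₃ μ t = -ν₂ t := by
    rw [hμ, triple_expand, horth, hu₁]
    simp
  -- derivative of μ
  have hμd : HasDerivAt μ (-(m t • ν₁ t) - n t • ν₂ t) t := by
    have hfun : μ = fun s => ν₁ s ⨯₃ ν₂ s := funext hμ
    rw [hfun]
    have h := hν₁d.cross3 hν₂d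
    convert h using 1
    rw [hdν₁, hdν₂]
    simp only [map_add, _root_.map_smul, LinearMap.add_apply, LinearMap.smul_apply,
      map_neg, LinearMap.neg_apply, cross_self, h1, h2]
    module
  -- derivative of the integral
  have hI : HasDerivAt (fun u => ∫ s in t₀..u, α s) (α t) t := by
    exact intervalIntegral.integral_hasDerivAt_right
      (hαs.continuous.intervalIntegrable t₀ t)
      (hαs.continuous.stronglyMeasurableAtFilter _ _)
      hαs.continuous.continuousAt
  -- derivative of Inv
  have hInvd : HasDerivAt Inv
      ((∫ s in t₀..t, α s) • (m t • ν₁ t + n t • ν₂ t)) t := by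
    have hfun : Inv = fun s => γ s - (∫ u in t₀..s, α u) • μ s := funext hInv
    rw [hfun]
    have h := hγd.fun_sub (hI.fun_smul hμd)
    refine h.congr_deriv ?_
    module
  have heq : deriv Inv t = (∫ s in t₀..t, α s) • (m t • ν₁ t + n t • ν₂ t) :=
    hInvd.deriv
  refine ⟨heq, ?_, ?_⟩
  · rw [heq, hξ]
    have hc : ν₂ t ⬝ᵥ ν₁ t = 0 := by rw [dotProduct_comm]; exact horth t
    simp only [smul_dotProduct, dotProduct_smul, add_dotProduct, dotProduct_sub,
      dotProduct_add, sub_dotProduct, smul_eq_mul, hu₁ t, hu₂ t, horth t, hc]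
    ring
  · rw [heq, hμ]
    simp only [smul_dotProduct, add_dotProduct, dot_self_cross, dot_cross_self,
      smul_zero, add_zero]
end

section
/- Let γ be a framed curve with Bishop frame {v, w, μ}, m̄(t) ≠ 0 for all t, and circular evolute E(t) = γ(t) − (α(t)/m̄(t)) v(t), which has tangent coefficient α_E(t) = −(d/dt)(α(t)/m̄(t)) and unit tangent direction v. Then for any fixed t₀, the involute of E with respect to t₀ equals the parallel curve of γ: E(t) − (∫_{t₀}^t α_E ds) v(t) = γ(t) − (α(t₀)/m̄(t₀)) v(t). -/
open Matrix

/-- The involute of the circular evolute is a parallel curve of the original curve: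
E(t) − (∫_{t₀}^t α_E) v(t) = γ(t) − (α(t₀)/m̄(t₀)) v(t). -/
theorem involute_of_evolute_eq_parallel
    (γ v w : ℝ → Fin 3 → ℝ)
    (hγ : ContDiff ℝ (⊤ : ℕ∞) γ) (hv : ContDiff ℝ (⊤ : ℕ∞) v) (hw : ContDiff ℝ (⊤ : ℕ∞) w)
    (hu₁ : ∀ t, v t ⬝ᵥ v t = 1) (hu₂ : ∀ t, w t ⬝ᵥ w t = 1)
    (horth : ∀ t, v t ⬝ᵥ w t = 0)
    (μ : ℝ → Fin 3 → ℝ) (hμ : ∀ t, μ t = v t ⨯₃ w t)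
    (m' n' α : ℝ → ℝ)
    (hm' : ContDiff ℝ (⊤ : ℕ∞) m') (hn' : ContDiff ℝ (⊤ : ℕ∞) n') (hα : ContDiff ℝ (⊤ : ℕ∞) α)
    (hdv : ∀ t, deriv v t = m' t • μ t)
    (hdw : ∀ t, deriv w t = n' t • μ t)
    (hdγ : ∀ t, deriv γ t = α t • μ t)
    (hm0 : ∀ t, m' t ≠ 0)
    (E : ℝ → Fin 3 → ℝ) (hE : ∀ t, E t = γ t - (α t / m' t) • v t)
    (αE : ℝ → ℝ) (hαE : ∀ t, αE t = -(deriv (fun s => α s / m' s) t))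
    (t₀ : ℝ) :
    ∀ t, E t - (∫ s in t₀..t, αE s) • v t = γ t - (α t₀ / m' t₀) • v t := by
  intro t
  have hf : ContDiff ℝ (⊤ : ℕ∞) (fun s => α s / m' s) := hα.div hm' hm0
  have hint : (∫ s in t₀..t, αE s) = -(α t / m' t - α t₀ / m' t₀) := by
    have : (∫ s in t₀..t, αE s) = -∫ s in t₀..t, deriv (fun s => α s / m' s) s := by
      rw [← intervalIntegral.integral_neg]
      simp only [hαE]
    rw [this, intervalIntegral.integral_deriv_eq_sub]
    · intro x _
      exact (hf.differentiable (by simp)).differentiableAt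
    · exact (hf.continuous_deriv (by simp)).intervalIntegrable _ _
  rw [hE, hint]
  ext i
  simp [smul_eq_mul]
  ring
end

section
/- Let γ be a framed curve with Bishop frame {v, w, μ}, m̄(t) ≠ 0 for all t, and circular evolute E(t) = γ(t) − (α/m̄)(t) v(t). Suppose α(t₀) = 0. Then: (1) t₀ is a 3/2-cusp of γ (equivalently α(t₀) = 0 and α'(t₀) ≠ 0) if and only if E is regular at t₀; (2) t₀ is a 4/3-cusp of γ (equivalently α(t₀) = α'(t₀) = 0 and α''(t₀) ≠ 0) if and only if t₀ is a 3/2-cusp of E. -/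
open Matrix

/-- Singularities of the circular evolute: at a singular point t₀ of γ,
γ has a 3/2-cusp iff E is regular, and γ has a 4/3-cusp iff E has a 3/2-cusp. -/
theorem evolute_singularities
    (γ v w : ℝ → Fin 3 → ℝ)
    (hγ : ContDiff ℝ (⊤ : ℕ∞) γ) (hv : ContDiff ℝ (⊤ : ℕ∞) v) (hw : ContDiff ℝ (⊤ : ℕ∞) w)
    (hu₁ : ∀ t, v t ⬝ᵥ v t = 1) (hu₂ : ∀ t, w t ⬝ᵥ w t = 1)
    (horth : ∀ t, v t ⬝ᵥ w t = 0)
    (μ : ℝ → Fin 3 → ℝ) (hμ : ∀ t, μ t = v t ⨯₃ w t)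
    (m' n' α : ℝ → ℝ)
    (hm' : ContDiff ℝ (⊤ : ℕ∞) m') (hn' : ContDiff ℝ (⊤ : ℕ∞) n') (hα : ContDiff ℝ (⊤ : ℕ∞) α)
    (hdv : ∀ t, deriv v t = m' t • μ t)
    (hdw : ∀ t, deriv w t = n' t • μ t)
    (hdγ : ∀ t, deriv γ t = α t • μ t)
    (hm0 : ∀ t, m' t ≠ 0)
    (E : ℝ → Fin 3 → ℝ) (hE : ∀ t, E t = γ t - (α t / m' t) • v t)
    (t₀ : ℝ) (hsing : α t₀ = 0) :
    ((deriv γ t₀ = 0 ∧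
        LinearIndependent ℝ ![iteratedDeriv 2 γ t₀, iteratedDeriv 3 γ t₀]) ↔
      deriv E t₀ ≠ 0) ∧
    ((deriv γ t₀ = 0 ∧ iteratedDeriv 2 γ t₀ = 0 ∧
        LinearIndependent ℝ ![iteratedDeriv 3 γ t₀, iteratedDeriv 4 γ t₀]) ↔
      (deriv E t₀ = 0 ∧
        LinearIndependent ℝ ![iteratedDeriv 2 E t₀, iteratedDeriv 3 E t₀])) := by
  -- basic differentiability facts
  have hVd : ∀ t, HasDerivAt v (m' t • μ t) t := fun t => by
    have h := (hv.differentiable (by simp) t).hasDerivAt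
    rwa [hdv t] at h
  have hWd : ∀ t, HasDerivAt w (n' t • μ t) t := fun t => by
    have h := (hw.differentiable (by simp) t).hasDerivAt
    rwa [hdw t] at h
  have hγd : ∀ t, HasDerivAt γ (α t • μ t) t := fun t => by
    have h := (hγ.differentiable (by simp) t).hasDerivAt
    rwa [hdγ t] at h
  -- derivative of μ
  have hUd : ∀ t, HasDerivAt μ (-(m' t • v t) - n' t • w t) t := by
    have hc0 : ∀ s, μ s 0 = v s 1 * w s 2 - v s 2 * w s 1 := fun s => by rw [hμ s]; rfl
    have hc1 : ∀ s, μ s 1 = v s 2 * w s 0 - v s 0 * w s 2 := fun s => by rw [hμ s]; rfl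
    have hc2 : ∀ s, μ s 2 = v s 0 * w s 1 - v s 1 * w s 0 := fun s => by rw [hμ s]; rfl
    intro t
    have hV : ∀ j, HasDerivAt (fun s => v s j) (m' t * μ t j) t := fun j => by
      simpa using hasDerivAt_pi.1 (hVd t) j
    have hW : ∀ j, HasDerivAt (fun s => w s j) (n' t * μ t j) t := fun j => by
      simpa using hasDerivAt_pi.1 (hWd t) j
    have hu₁E := hu₁ t; have hu₂E := hu₂ t; have horthE := horth t
    simp only [vec3_dotProduct] at hu₁E hu₂E horthE
    apply hasDerivAt_pi.2
    intro i
    fin_cases i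
    · show HasDerivAt (fun x => μ x 0) ((-(m' t • v t) - n' t • w t) 0) t
      rw [show (fun s => μ s (0:Fin 3)) = fun s => v s 1 * w s 2 - v s 2 * w s 1 from
        funext fun s => hc0 s]
      refine (((hV 1).mul (hW 2)).sub ((hV 2).mul (hW 1))).congr_deriv ?_
      refine Eq.symm ?_
      simp only [Pi.sub_apply, Pi.neg_apply, Pi.smul_apply, smul_eq_mul]
      rw [hc1 t, hc2 t]
      linear_combination (-(m' t * w t 0) - n' t * v t 0) * horthE + (m' t * v t 0) * hu₂E +
        (n' t * w t 0) * hu₁E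
    · show HasDerivAt (fun x => μ x 1) ((-(m' t • v t) - n' t • w t) 1) t
      rw [show (fun s => μ s (1:Fin 3)) = fun s => v s 2 * w s 0 - v s 0 * w s 2 from
        funext fun s => hc1 s]
      refine (((hV 2).mul (hW 0)).sub ((hV 0).mul (hW 2))).congr_deriv ?_
      refine Eq.symm ?_
      simp only [Pi.sub_apply, Pi.neg_apply, Pi.smul_apply, smul_eq_mul]
      rw [hc2 t, hc0 t]
      linear_combination (-(m' t * w t 1) - n' t * v t 1) * horthE + (m' t * v t 1) * hu₂E +
        (n' t * w t 1) * hu₁E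
    · show HasDerivAt (fun x => μ x 2) ((-(m' t • v t) - n' t • w t) 2) t
      rw [show (fun s => μ s (2:Fin 3)) = fun s => v s 0 * w s 1 - v s 1 * w s 0 from
        funext fun s => hc2 s]
      refine (((hV 0).mul (hW 1)).sub ((hV 1).mul (hW 0))).congr_deriv ?_
      refine Eq.symm ?_
      simp only [Pi.sub_apply, Pi.neg_apply, Pi.smul_apply, smul_eq_mul]
      rw [hc0 t, hc1 t]
      linear_combination (-(m' t * w t 2) - n' t * v t 2) * horthE + (m' t * v t 2) * hu₂E +
        (n' t * w t 2) * hu₁E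
  -- the frame derivative recursion
  have frame : ∀ (p q r dp dq dr : ℝ → ℝ), (∀ t, HasDerivAt p (dp t) t) →
      (∀ t, HasDerivAt q (dq t) t) → (∀ t, HasDerivAt r (dr t) t) →
      ∀ t, HasDerivAt (fun s => p s • v s + q s • w s + r s • μ s)
        ((dp t - r t * m' t) • v t + (dq t - r t * n' t) • w t +
          (dr t + p t * m' t + q t * n' t) • μ t) t := by
    intro p q r dp dq dr hp hq hr t
    have h := (((hp t).smul (hVd t)).add ((hq t).smul (hWd t))).add ((hr t).smul (hUd t))
    refine h.congr_deriv ?_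
    refine Eq.symm ?_
    module
  -- scalar derivative helpers
  have sd : ∀ (f : ℝ → ℝ), ContDiff ℝ (⊤ : ℕ∞) f →
      (∀ t, HasDerivAt f (deriv f t) t) ∧ ContDiff ℝ (⊤ : ℕ∞) (deriv f) := fun f hf =>
    ⟨fun t => (hf.differentiable (by simp) t).hasDerivAt,
      (contDiff_infty_iff_deriv.mp hf).2⟩
  have hαi : ContDiff ℝ (⊤ : ℕ∞) α := hα.of_le (by simp)
  have hmi : ContDiff ℝ (⊤ : ℕ∞) m' := hm'.of_le (by simp)
  have hni : ContDiff ℝ (⊤ : ℕ∞) n' := hn'.of_le (by simp)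
  obtain ⟨hA0, hα1⟩ := sd α hαi
  obtain ⟨hA1, hα2⟩ := sd _ hα1
  obtain ⟨hA2, hα3⟩ := sd _ hα2
  obtain ⟨hA3, -⟩ := sd _ hα3
  obtain ⟨hM0, hm1⟩ := sd m' hmi
  obtain ⟨hM1, hm2⟩ := sd _ hm1
  obtain ⟨hM2, -⟩ := sd _ hm2
  obtain ⟨hN0, hn1⟩ := sd n' hni
  obtain ⟨hN1, hn2⟩ := sd _ hn1
  obtain ⟨hN2, -⟩ := sd _ hn2

  -- γ derivative chain
  have hG1 : deriv γ = fun t => (0:ℝ) • v t + (0:ℝ) • w t + α t • μ t := by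
    funext t; rw [hdγ t]; module
  have H1 := frame (fun _ => (0:ℝ)) (fun _ => (0:ℝ)) α (fun _ => (0:ℝ)) (fun _ => (0:ℝ))
    (deriv α) (fun t => hasDerivAt_const t 0) (fun t => hasDerivAt_const t 0) hA0
  have e2 : iteratedDeriv 2 γ = fun t => (-(α t * m' t)) • v t + (-(α t * n' t)) • w t +
      deriv α t • μ t := by
    have h0 : iteratedDeriv 2 γ = deriv (deriv γ) := by
      have h := iteratedDeriv_succ (n := 1) (f := γ)
      rw [iteratedDeriv_one] at h
      exact h
    rw [h0, hG1]
    funext t; exact ((H1 t).deriv).trans (by module)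
  have H2 := frame (fun s => -(α s * m' s)) (fun s => -(α s * n' s)) (deriv α)
      (fun s => -(deriv α s * m' s + α s * deriv m' s))
      (fun s => -(deriv α s * n' s + α s * deriv n' s)) (deriv (deriv α))
      (fun s => ((hA0 s).mul (hM0 s)).neg) (fun s => ((hA0 s).mul (hN0 s)).neg) hA1
  have e3 : iteratedDeriv 3 γ = fun t =>
      (-(deriv α t * m' t + α t * deriv m' t) - deriv α t * m' t) • v t +
      (-(deriv α t * n' t + α t * deriv n' t) - deriv α t * n' t) • w t +
      (deriv (deriv α) t + (-(α t * m' t)) * m' t + (-(α t * n' t)) * n' t) • μ t := by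
    have h0 : iteratedDeriv 3 γ = deriv (iteratedDeriv 2 γ) :=
      iteratedDeriv_succ (n := 2) (f := γ)
    rw [h0, e2]
    funext t; exact (H2 t).deriv
  have H3 := frame
      (fun s => -(deriv α s * m' s + α s * deriv m' s) - deriv α s * m' s)
      (fun s => -(deriv α s * n' s + α s * deriv n' s) - deriv α s * n' s)
      (fun s => deriv (deriv α) s + (-(α s * m' s)) * m' s + (-(α s * n' s)) * n' s)
      (fun s => -((deriv (deriv α) s * m' s + deriv α s * deriv m' s) +
          (deriv α s * deriv m' s + α s * deriv (deriv m') s)) -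
          (deriv (deriv α) s * m' s + deriv α s * deriv m' s))
      (fun s => -((deriv (deriv α) s * n' s + deriv α s * deriv n' s) +
          (deriv α s * deriv n' s + α s * deriv (deriv n') s)) -
          (deriv (deriv α) s * n' s + deriv α s * deriv n' s))
      (fun s => deriv (deriv (deriv α)) s +
          ((-(deriv α s * m' s + α s * deriv m' s)) * m' s + (-(α s * m' s)) * deriv m' s) +
          ((-(deriv α s * n' s + α s * deriv n' s)) * n' s + (-(α s * n' s)) * deriv n' s))
      (fun s => ((((hA1 s).mul (hM0 s)).add ((hA0 s).mul (hM1 s))).neg).sub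
        ((hA1 s).mul (hM0 s)))
      (fun s => ((((hA1 s).mul (hN0 s)).add ((hA0 s).mul (hN1 s))).neg).sub
        ((hA1 s).mul (hN0 s)))
      (fun s => ((hA2 s).add ((((hA0 s).mul (hM0 s)).neg).mul (hM0 s))).add
        ((((hA0 s).mul (hN0 s)).neg).mul (hN0 s)))
  have g4 := by
    have h : iteratedDeriv 4 γ t₀ = deriv (iteratedDeriv 3 γ) t₀ :=
      congrFun (iteratedDeriv_succ (n := 3) (f := γ)) t₀
    rw [e3] at h
    exact h.trans (H3 t₀).deriv
  -- E derivative chain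
  have hb : ContDiff ℝ (⊤ : ℕ∞) (fun t => α t / m' t) := hαi.div hmi hm0
  obtain ⟨hB0, hb1⟩ := sd _ hb
  obtain ⟨hB1, hb2⟩ := sd _ hb1
  obtain ⟨hB2, hb3⟩ := sd _ hb2
  obtain ⟨hB3, -⟩ := sd _ hb3
  have hbm : ∀ t, (α t / m' t) * m' t = α t := fun t => div_mul_cancel₀ _ (hm0 t)
  have hdE : ∀ t, HasDerivAt E ((-(deriv (fun u => α u / m' u) t)) • v t + (0:ℝ) • w t +
      (0:ℝ) • μ t) t := by
    intro t
    have hEf : E = fun s => γ s - (α s / m' s) • v s := funext fun s => hE s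
    rw [hEf]
    have h := (hγd t).sub ((hB0 t).smul (hVd t))
    refine h.congr_deriv ?_
    refine Eq.symm ?_
    rw [smul_smul, hbm t]
    module
  have f1fun : deriv E = fun t => (-(deriv (fun u => α u / m' u) t)) • v t + (0:ℝ) • w t +
      (0:ℝ) • μ t := funext fun t => (hdE t).deriv
  have HE2 := frame (fun s => -(deriv (fun u => α u / m' u) s)) (fun _ => (0:ℝ))
      (fun _ => (0:ℝ)) (fun s => -(deriv (deriv (fun u => α u / m' u)) s)) (fun _ => (0:ℝ))
      (fun _ => (0:ℝ)) (fun s => (hB1 s).neg) (fun s => hasDerivAt_const s 0)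
      (fun s => hasDerivAt_const s 0)
  have eE2 : iteratedDeriv 2 E = fun t => (-(deriv (deriv (fun u => α u / m' u)) t)) • v t +
      (0:ℝ) • w t + (-(deriv (fun u => α u / m' u) t * m' t)) • μ t := by
    have h0 : iteratedDeriv 2 E = deriv (deriv E) := by
      have h := iteratedDeriv_succ (n := 1) (f := E)
      rw [iteratedDeriv_one] at h
      exact h
    rw [h0, f1fun]
    funext t; exact ((HE2 t).deriv).trans (by module)
  have HE3 := frame (fun s => -(deriv (deriv (fun u => α u / m' u)) s)) (fun _ => (0:ℝ))
      (fun s => -(deriv (fun u => α u / m' u) s * m' s))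
      (fun s => -(deriv (deriv (deriv (fun u => α u / m' u))) s)) (fun _ => (0:ℝ))
      (fun s => -(deriv (deriv (fun u => α u / m' u)) s * m' s +
        deriv (fun u => α u / m' u) s * deriv m' s))
      (fun s => (hB2 s).neg) (fun s => hasDerivAt_const s 0)
      (fun s => ((hB1 s).mul (hM0 s)).neg)
  have gE3 := by
    have h : iteratedDeriv 3 E t₀ = deriv (iteratedDeriv 2 E) t₀ :=
      congrFun (iteratedDeriv_succ (n := 2) (f := E)) t₀
    rw [eE2] at h
    exact h.trans (HE3 t₀).deriv
  -- scalar relations between α and b = α / m'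
  have hda : ∀ t, deriv α t =
      deriv (fun u => α u / m' u) t * m' t + (α t / m' t) * deriv m' t := by
    intro t
    have h2 := ((hB0 t).mul (hM0 t)).deriv
    have h3 : deriv (fun y => (α y / m' y) * m' y) t = deriv α t := by
      congr 1; funext s; exact hbm s
    exact h3.symm.trans h2
  have hda1fun : deriv α = fun t =>
      deriv (fun u => α u / m' u) t * m' t + (α t / m' t) * deriv m' t := funext hda
  have hda2 : ∀ t, deriv (deriv α) t =
      (deriv (deriv (fun u => α u / m' u)) t * m' t +
        deriv (fun u => α u / m' u) t * deriv m' t) +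
      (deriv (fun u => α u / m' u) t * deriv m' t + (α t / m' t) * deriv (deriv m') t) := by
    intro t
    have h2 := (((hB1 t).mul (hM0 t)).add ((hB0 t).mul (hM1 t))).deriv
    have h3 : deriv (fun y => deriv (fun u => α u / m' u) y * m' y +
        (α y / m' y) * deriv m' y) t = deriv (deriv α) t := by
      congr 1; exact hda1fun.symm
    exact h3.symm.trans h2
  have hb0 : α t₀ / m' t₀ = 0 := by rw [hsing, zero_div]
  have hA1B : deriv α t₀ = deriv (fun u => α u / m' u) t₀ * m' t₀ := by
    have h := hda t₀; rw [hb0, zero_mul, add_zero] at h; exact h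
  -- orthonormality at t₀
  have hWVd : w t₀ ⬝ᵥ v t₀ = 0 := by rw [dotProduct_comm]; exact horth t₀
  have hVU : v t₀ ⬝ᵥ μ t₀ = 0 := by rw [hμ t₀]; exact dot_self_cross _ _
  have hWU : w t₀ ⬝ᵥ μ t₀ = 0 := by rw [hμ t₀]; exact dot_cross_self _ _
  have hUV : μ t₀ ⬝ᵥ v t₀ = 0 := by rw [dotProduct_comm]; exact hVU
  have hUW : μ t₀ ⬝ᵥ w t₀ = 0 := by rw [dotProduct_comm]; exact hWU
  have hUU : μ t₀ ⬝ᵥ μ t₀ = 1 := by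
    rw [hμ t₀, cross_dot_cross, hu₁ t₀, hu₂ t₀, horth t₀]; ring
  have coord : ∀ P Q R : ℝ, P • v t₀ + Q • w t₀ + R • μ t₀ = 0 → P = 0 ∧ Q = 0 ∧ R = 0 := by
    intro P Q R h
    refine ⟨?_, ?_, ?_⟩
    · have := congrArg (fun X => X ⬝ᵥ v t₀) h
      simpa [add_dotProduct, smul_dotProduct, hu₁ t₀, hWVd, hUV, smul_eq_mul] using this
    · have := congrArg (fun X => X ⬝ᵥ w t₀) h
      simpa [add_dotProduct, smul_dotProduct, hu₂ t₀, horth t₀, hUW, smul_eq_mul] using this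
    · have := congrArg (fun X => X ⬝ᵥ μ t₀) h
      simpa [add_dotProduct, smul_dotProduct, hUU, hVU, hWU, smul_eq_mul] using this
  have hUne : μ t₀ ≠ 0 := by
    intro h; rw [h] at hUU; simp at hUU
  have hVne : v t₀ ≠ 0 := by
    intro h; have := hu₁ t₀; rw [h] at this; simp at this
  have indepU : ∀ c P Q S : ℝ, c ≠ 0 → P ≠ 0 →
      LinearIndependent ℝ ![c • μ t₀, P • v t₀ + Q • w t₀ + S • μ t₀] := by
    intro c P Q S hc hP
    rw [LinearIndependent.pair_iff]
    intro s u hsu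
    have h : (u * P) • v t₀ + (u * Q) • w t₀ + (s * c + u * S) • μ t₀ = 0 := by
      rw [← hsu]; module
    obtain ⟨h1, -, h3⟩ := coord _ _ _ h
    have hu : u = 0 := (mul_eq_zero.mp h1).resolve_right hP
    refine ⟨?_, hu⟩
    simp only [hu, zero_mul, add_zero] at h3
    exact (mul_eq_zero.mp h3).resolve_right hc
  have indepV : ∀ c P S : ℝ, c ≠ 0 → S ≠ 0 →
      LinearIndependent ℝ ![c • v t₀, P • v t₀ + S • μ t₀] := by
    intro c P S hc hS
    rw [LinearIndependent.pair_iff]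
    intro s u hsu
    have h : (s * c + u * P) • v t₀ + (0:ℝ) • w t₀ + (u * S) • μ t₀ = 0 := by
      rw [← hsu]; module
    obtain ⟨h1, -, h3⟩ := coord _ _ _ h
    have hu : u = 0 := (mul_eq_zero.mp h3).resolve_right hS
    refine ⟨?_, hu⟩
    simp only [hu, zero_mul, add_zero] at h1
    exact (mul_eq_zero.mp h1).resolve_right hc
  -- values at t₀
  have hdγ0 : deriv γ t₀ = 0 := by rw [hdγ t₀, hsing, zero_smul]
  have g2 : iteratedDeriv 2 γ t₀ = deriv α t₀ • μ t₀ := by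
    have h := congrFun e2 t₀
    simp only [hsing] at h
    rw [h]; module
  have g3 : iteratedDeriv 3 γ t₀ = (-(2 * (deriv α t₀ * m' t₀))) • v t₀ +
      (-(2 * (deriv α t₀ * n' t₀))) • w t₀ + deriv (deriv α) t₀ • μ t₀ := by
    have h := congrFun e3 t₀
    simp only [hsing] at h
    rw [h]; module
  have f1 : deriv E t₀ = (-(deriv (fun u => α u / m' u) t₀)) • v t₀ := by
    have h := congrFun f1fun t₀
    rw [h]; module
  refine ⟨⟨?_, ?_⟩, ⟨?_, ?_⟩⟩
  · -- 3/2-cusp of γ → E regular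
    rintro ⟨-, hli⟩
    intro hE0
    have hB1z : deriv (fun u => α u / m' u) t₀ = 0 := by
      rw [f1] at hE0
      rcases smul_eq_zero.mp hE0 with h | h
      · exact neg_eq_zero.mp h
      · exact absurd h hVne
    have hA1z : deriv α t₀ = 0 := by rw [hA1B, hB1z, zero_mul]
    have hz : iteratedDeriv 2 γ t₀ = 0 := by rw [g2, hA1z, zero_smul]
    exact absurd hz (by simpa using hli.ne_zero 0)
  · -- E regular → 3/2-cusp of γ
    intro hEne
    have hB1ne : deriv (fun u => α u / m' u) t₀ ≠ 0 := by
      intro h; apply hEne; rw [f1, h]; simp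
    have hA1ne : deriv α t₀ ≠ 0 := by rw [hA1B]; exact mul_ne_zero hB1ne (hm0 t₀)
    refine ⟨hdγ0, ?_⟩
    rw [g2, g3]
    have := indepU (deriv α t₀) (-(2 * (deriv α t₀ * m' t₀))) (-(2 * (deriv α t₀ * n' t₀)))
      (deriv (deriv α) t₀) hA1ne
      (neg_ne_zero.mpr (mul_ne_zero two_ne_zero (mul_ne_zero hA1ne (hm0 t₀))))
    exact this
  · -- 4/3-cusp of γ → 3/2-cusp of E
    rintro ⟨-, h2, hli⟩
    have hA1z : deriv α t₀ = 0 := by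
      rw [g2] at h2
      rcases smul_eq_zero.mp h2 with h | h
      · exact h
      · exact absurd h hUne
    have hB1z : deriv (fun u => α u / m' u) t₀ = 0 := by
      have h := hA1B; rw [hA1z] at h
      exact (mul_eq_zero.mp h.symm).resolve_right (hm0 t₀)
    have hA2B : deriv (deriv α) t₀ = deriv (deriv (fun u => α u / m' u)) t₀ * m' t₀ := by
      have h := hda2 t₀
      simp only [hb0, hB1z, zero_mul, add_zero] at h
      exact h
    have hA2ne : deriv (deriv α) t₀ ≠ 0 := by
      intro hA2z
      have hz : iteratedDeriv 3 γ t₀ = 0 := by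
        rw [g3, hA1z, hA2z]; simp
      exact absurd hz (by simpa using hli.ne_zero 0)
    have hB2ne : deriv (deriv (fun u => α u / m' u)) t₀ ≠ 0 := by
      intro h; apply hA2ne; rw [hA2B, h, zero_mul]
    constructor
    · rw [f1, hB1z]; simp
    · have fE2c : iteratedDeriv 2 E t₀ = (-(deriv (deriv (fun u => α u / m' u)) t₀)) • v t₀ := by
        have h := congrFun eE2 t₀
        simp only [hB1z] at h
        rw [h]; module
      have fE3c : iteratedDeriv 3 E t₀ = (-(deriv (deriv (deriv (fun u => α u / m' u))) t₀)) • v t₀ +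
          (-(2 * (deriv (deriv (fun u => α u / m' u)) t₀ * m' t₀))) • μ t₀ := by
        have h := gE3
        simp only [hB1z] at h
        rw [h]; module
      rw [fE2c, fE3c]
      exact indepV _ _ _ (neg_ne_zero.mpr hB2ne)
        (neg_ne_zero.mpr (mul_ne_zero two_ne_zero (mul_ne_zero hB2ne (hm0 t₀))))
  · -- 3/2-cusp of E → 4/3-cusp of γ
    rintro ⟨hE0, hliE⟩
    have hB1z : deriv (fun u => α u / m' u) t₀ = 0 := by
      rw [f1] at hE0
      rcases smul_eq_zero.mp hE0 with h | h
      · exact neg_eq_zero.mp h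
      · exact absurd h hVne
    have hA1z : deriv α t₀ = 0 := by rw [hA1B, hB1z, zero_mul]
    have hA2B : deriv (deriv α) t₀ = deriv (deriv (fun u => α u / m' u)) t₀ * m' t₀ := by
      have h := hda2 t₀
      simp only [hb0, hB1z, zero_mul, add_zero] at h
      exact h
    have fE2c : iteratedDeriv 2 E t₀ = (-(deriv (deriv (fun u => α u / m' u)) t₀)) • v t₀ := by
      have h := congrFun eE2 t₀
      simp only [hB1z] at h
      rw [h]; module
    have hB2ne : deriv (deriv (fun u => α u / m' u)) t₀ ≠ 0 := by
      intro h
      have hz : iteratedDeriv 2 E t₀ = 0 := by rw [fE2c, h]; simp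
      exact absurd hz (by simpa using hliE.ne_zero 0)
    have hA2ne : deriv (deriv α) t₀ ≠ 0 := by
      rw [hA2B]; exact mul_ne_zero hB2ne (hm0 t₀)
    refine ⟨hdγ0, by rw [g2, hA1z, zero_smul], ?_⟩
    have g3c : iteratedDeriv 3 γ t₀ = deriv (deriv α) t₀ • μ t₀ := by
      rw [g3, hA1z]; module
    have g4c : iteratedDeriv 4 γ t₀ = (-(3 * (deriv (deriv α) t₀ * m' t₀))) • v t₀ +
        (-(3 * (deriv (deriv α) t₀ * n' t₀))) • w t₀ + deriv (deriv (deriv α)) t₀ • μ t₀ := by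
      have h := g4
      simp only [hsing, hA1z] at h
      rw [h]; module
    rw [g3c, g4c]
    exact indepU _ _ _ _ hA2ne
      (neg_ne_zero.mpr (mul_ne_zero three_ne_zero (mul_ne_zero hA2ne (hm0 t₀))))
end
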